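/- Let β > γ > 0 and m ≥ 0 be constants, let a > 0, b ≥ 0, and let u : [t₀,∞) → ℝ be differentiable, nonnegative, and satisfy u'(t) ≤ (β·a/(m + b + u(t)) − γ)·u(t) for all t ≥ t₀. Then limsup_{t→∞} u(t) ≤ (β·a/γ − m − b)₊. -/

import Mathlib

/-!
Above any level `c > (βa/γ − m − b)₊` the right-hand side `(βa/(m + b + x) − γ) x` is bounded by
its value at `x = c`, which is negative. So `u` decreases at a uniform rate while it stays above `c`;
being nonnegative, it must drop below `c` in finite time, and it cannot cross `c` upwards again
because its derivative is negative on that level.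
-/

open Filter Set

section Trapping

variable {u : ℝ → ℝ}

theorem exists_le_of_deriv_le_neg {t₀ c δ L : ℝ} (hδ : 0 < δ)
    (hdiff : ∀ t ≥ t₀, DifferentiableAt ℝ u t) (hL : ∀ t ≥ t₀, L ≤ u t)
    (hder : ∀ t ≥ t₀, c < u t → deriv u t ≤ -δ) : ∃ t ≥ t₀, u t ≤ c := by
  by_contra! habove
  have hslope : ∀ t ≥ t₀, u t - u t₀ ≤ -δ * (t - t₀) := fun t ht =>
    (convex_Ici t₀).image_sub_le_mul_sub_of_deriv_le
      (fun x hx => (hdiff x hx).continuousAt.continuousWithinAt)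
      (fun x hx => (hdiff x (interior_subset hx)).differentiableWithinAt)
      (fun x hx => hder x (interior_subset hx) (habove x (interior_subset hx)))
      t₀ (mem_Ici.2 le_rfl) t ht ht
  set T := t₀ + (u t₀ - L + 1) / δ
  have hT : t₀ ≤ T := le_add_of_nonneg_right
    (div_nonneg (by linarith [hL t₀ le_rfl]) hδ.le)
  have hdrop : δ * (T - t₀) = u t₀ - L + 1 := by
    simp only [T, add_sub_cancel_left]
    field_simp
  linarith [hslope T hT, hL T hT]

theorem le_of_deriv_neg_of_eq {t₁ c : ℝ} (hdiff : ∀ t ≥ t₁, DifferentiableAt ℝ u t)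
    (h₁ : u t₁ ≤ c) (hder : ∀ t ≥ t₁, u t = c → deriv u t < 0) : ∀ t ≥ t₁, u t ≤ c :=
  fun _ ht => image_le_of_deriv_right_lt_deriv_boundary (B := fun _ => c) (B' := 0)
    (fun x hx => (hdiff x hx.1).continuousAt.continuousWithinAt)
    (fun x hx => (hdiff x hx.1).hasDerivAt.hasDerivWithinAt) h₁
    (fun _ => hasDerivAt_const _ c) (fun x hx => hder x hx.1) ⟨ht, le_rfl⟩

theorem eventually_le_of_deriv_le_neg {t₀ c δ L : ℝ} (hδ : 0 < δ)
    (hdiff : ∀ t ≥ t₀, DifferentiableAt ℝ u t) (hL : ∀ t ≥ t₀, L ≤ u t)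
    (hder : ∀ t ≥ t₀, c ≤ u t → deriv u t ≤ -δ) : ∀ᶠ t in atTop, u t ≤ c := by
  obtain ⟨t₁, ht₁, hu₁⟩ :=
    exists_le_of_deriv_le_neg hδ hdiff hL fun t ht hc => hder t ht hc.le
  filter_upwards [eventually_ge_atTop t₁] with t ht
  refine le_of_deriv_neg_of_eq (fun s hs => hdiff s (ht₁.trans hs)) hu₁ ?_ t ht
  exact fun s hs hsc => (hder s (ht₁.trans hs) hsc.ge).trans_lt (neg_neg_of_pos hδ)

end Trapping

theorem div_add_sub_mul_le_of_le {p γ k c x : ℝ} (hp : 0 ≤ p) (hkc : 0 < k + c) (hc : 0 ≤ c)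
    (hrate : p / (k + c) ≤ γ) (hcx : c ≤ x) :
    (p / (k + x) - γ) * x ≤ (p / (k + c) - γ) * c :=
  calc (p / (k + x) - γ) * x
      ≤ (p / (k + c) - γ) * x := by
        gcongr
        linarith
    _ ≤ (p / (k + c) - γ) * c := mul_le_mul_of_nonpos_left hcx (sub_nonpos.2 hrate)

theorem stmt_17_general (β γ m a b t₀ : ℝ) (hγ : 0 < γ) (hβγ : γ < β)
    (ha : 0 < a) (u : ℝ → ℝ)
    (hdiff : ∀ t ≥ t₀, DifferentiableAt ℝ u t)
    (hnn : ∀ t ≥ t₀, 0 ≤ u t)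
    (hineq : ∀ t ≥ t₀, deriv u t ≤ (β * a / (m + b + u t) - γ) * u t) :
    limsup u atTop ≤ max (β * a / γ - m - b) 0 := by
  have hp : 0 ≤ β * a := (mul_pos (hγ.trans hβγ) ha).le
  refine le_of_forall_gt_imp_ge_of_dense fun c hc => ?_
  have hc₀ : 0 < c := (le_max_right _ _).trans_lt hc
  have hck : β * a / γ < m + b + c := by linarith [(le_max_left _ _).trans_lt hc]
  have hkc : 0 < m + b + c := (div_nonneg hp hγ.le).trans_lt hck
  have hrate : β * a / (m + b + c) < γ := by
    rw [div_lt_iff₀ hkc]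
    rwa [div_lt_iff₀' hγ] at hck
  have hcobdd : IsCoboundedUnder (· ≤ ·) atTop u :=
    isCoboundedUnder_le_of_eventually_le atTop (eventually_atTop.2 ⟨t₀, hnn⟩)
  refine limsup_le_of_le hcobdd
    (eventually_le_of_deriv_le_neg (neg_pos.2 (mul_neg_of_neg_of_pos (sub_neg.2 hrate) hc₀))
      hdiff hnn fun t ht hct => ?_)
  rw [neg_neg]
  exact (hineq t ht).trans (div_add_sub_mul_le_of_le hp hkc hc₀.le hrate.le hct)

/-- If `u ≥ 0` satisfies `u' ≤ (βa/(m+b+u) − γ) u` with `β > γ > 0`,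
then `limsup u ≤ (βa/γ − m − b)₊`. -/
theorem stmt_17 (β γ m a b t₀ : ℝ) (hγ : 0 < γ) (hβγ : γ < β) (hm : 0 ≤ m)
    (ha : 0 < a) (hb : 0 ≤ b) (u : ℝ → ℝ)
    (hdiff : ∀ t ≥ t₀, DifferentiableAt ℝ u t)
    (hnn : ∀ t ≥ t₀, 0 ≤ u t)
    (hineq : ∀ t ≥ t₀, deriv u t ≤ (β * a / (m + b + u t) - γ) * u t) :
    limsup u atTop ≤ max (β * a / γ - m - b) 0 :=
  stmt_17_general β γ m a b t₀ hγ hβγ ha u hdiff hnn hineq
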